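/- arXiv:2009.06550 — 3 statements merged into one kernel-verified Lean document; each statement's English description precedes it below -/
import Mathlib

section
/- Suppose the primal feasible set X(b) and the dual feasible set Y(c) are both nonempty. If the set L*_p(K* × C*) = {(A* y − w, ⟨b,y⟩) : y ∈ K*, w ∈ C*} is closed in E × ℝ, then the dual is solvable and there is zero duality gap: there exists y* ∈ Y(c) with ⟨b, y*⟩ = D* and P* = D*. Symmetrically, if the set L*_d(C × K) = {(A x + s, ⟨c,x⟩) : x ∈ C, s ∈ K} is closed in E' × ℝ, then the primal is solvable (some x* ∈ X(b) attains P*) and P* = D*. -/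
open RealInnerProductSpace Set Pointwise

variable {E E' : Type*}
  [NormedAddCommGroup E] [InnerProductSpace ℝ E] [FiniteDimensional ℝ E]
  [NormedAddCommGroup E'] [InnerProductSpace ℝ E'] [FiniteDimensional ℝ E']

/-- A nonempty closed convex cone containing `0`. -/
structure IsClosedConvexCone {F : Type*} [NormedAddCommGroup F] [InnerProductSpace ℝ F]
    (K : Set F) : Prop where
  closed : IsClosed K
  convex : Convex ℝ K
  smul_mem : ∀ ⦃x⦄, x ∈ K → ∀ ⦃t : ℝ⦄, 0 ≤ t → t • x ∈ K
  zero_mem : (0 : F) ∈ K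

/-- The dual cone `S* = {y : ⟨x,y⟩ ≥ 0 ∀ x ∈ S}`. -/
def dualCone {F : Type*} [NormedAddCommGroup F] [InnerProductSpace ℝ F] (S : Set F) : Set F :=
  {y | ∀ x ∈ S, 0 ≤ ⟪x, y⟫}

/-- The polar cone `S° = {y : ⟨x,y⟩ ≤ 0 ∀ x ∈ S}`. -/
def polarCone {F : Type*} [NormedAddCommGroup F] [InnerProductSpace ℝ F] (S : Set F) : Set F :=
  {y | ∀ x ∈ S, ⟪x, y⟫ ≤ 0}

/-- Primal feasible set `X(b) = {x ∈ C : b - A x ∈ K}`. -/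
def Xfeas (A : E →ₗ[ℝ] E') (K : Set E') (C : Set E) (b : E') : Set E :=
  {x | x ∈ C ∧ b - A x ∈ K}

/-- Dual feasible set `Y(c) = {y ∈ K* : A* y - c ∈ C*}`. -/
def Yfeas (A : E →ₗ[ℝ] E') (K : Set E') (C : Set E) (c : E) : Set E' :=
  {y | y ∈ dualCone K ∧ LinearMap.adjoint A y - c ∈ dualCone C}

/-- Primal optimal value `P* = sup {⟨c,x⟩ : x ∈ X(b)}`. -/
noncomputable def Pval (A : E →ₗ[ℝ] E') (K : Set E') (C : Set E) (b : E') (c : E) : ℝ :=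
  sSup ((fun x => ⟪c, x⟫) '' Xfeas A K C b)

/-- Dual optimal value `D* = inf {⟨b,y⟩ : y ∈ Y(c)}`. -/
noncomputable def Dval (A : E →ₗ[ℝ] E') (K : Set E') (C : Set E) (b : E') (c : E) : ℝ :=
  sInf ((fun y => ⟪b, y⟫) '' Yfeas A K C c)

/-- Recession cone of the primal feasible region: `{x ∈ C : A x ∈ -K}`. -/
def recXSet (A : E →ₗ[ℝ] E') (K : Set E') (C : Set E) : Set E :=
  {x | x ∈ C ∧ A x ∈ -K}

/-- Recession cone of the dual feasible region: `{y ∈ K* : A* y ∈ C*}`. -/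
def recYSet (A : E →ₗ[ℝ] E') (K : Set E') (C : Set E) : Set E' :=
  {y | y ∈ dualCone K ∧ LinearMap.adjoint A y ∈ dualCone C}

/-- `X(b)` is almost feasible. -/
def AlmostFeasX (A : E →ₗ[ℝ] E') (K : Set E') (C : Set E) (b : E') : Prop :=
  ∀ ε : ℝ, 0 < ε → ∃ bε : E', ‖bε‖ ≤ ε ∧ (Xfeas A K C (b + bε)).Nonempty

/-- `Y(c)` is almost feasible. -/
def AlmostFeasY (A : E →ₗ[ℝ] E') (K : Set E') (C : Set E) (c : E) : Prop :=
  ∀ ε : ℝ, 0 < ε → ∃ cε : E, ‖cε‖ ≤ ε ∧ (Yfeas A K C (c + cε)).Nonempty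

/-!
The set `M = {(A* y - w, ⟪b, y⟫) : y ∈ K*, w ∈ C*}` is a convex cone whose slice over `c` is the
set of dual objective values: `(c, t) ∈ M ↔ t ∈ ⟪b, Y(c)⟫`. If `M` is closed, this set of values is
closed and bounded below by weak duality, so its infimum is attained. For `γ < D*` the point
`(c, γ)` lies outside `M`; a functional `(e, t) ↦ s (t - ⟪x, e⟫)` that is nonnegative on `M` and
negative at `(c, γ)` has `s > 0`, and nonnegativity on `M` says exactly that `x` is primal feasible,
while `⟪c, x⟫ > γ`. Hence `P* ≥ D*`.

The primal half is the dual half applied to the dual problem: by the bipolar theorem `K** = K`, it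
is the conic problem with data `(-A*, C*, K*, -c, -b)`, whose primal and dual are the original dual
and primal.
-/

section Cones

variable {F : Type*} [NormedAddCommGroup F] [InnerProductSpace ℝ F]

theorem isClosedConvexCone_dualCone [CompleteSpace F] (S : Set F) :
    IsClosedConvexCone (dualCone S) :=
  let P := ProperCone.innerDual S
  { closed := P.isClosed
    convex := P.convex
    smul_mem := fun _ hx _ ht => P.smul_mem hx ht
    zero_mem := P.zero_mem }

theorem IsClosedConvexCone.add_mem {K : Set F} (hK : IsClosedConvexCone K) {x y : F}
    (hx : x ∈ K) (hy : y ∈ K) : x + y ∈ K := by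
  have hmid := hK.convex hx hy (by norm_num : (0 : ℝ) ≤ 2⁻¹) (by norm_num : (0 : ℝ) ≤ 2⁻¹)
    (by norm_num)
  simpa [smul_add, smul_smul] using hK.smul_mem hmid zero_le_two

def IsClosedConvexCone.toProperCone {K : Set F} (hK : IsClosedConvexCone K) : ProperCone ℝ F where
  carrier := K
  add_mem' := hK.add_mem
  zero_mem' := hK.zero_mem
  smul_mem' c _ hx := hK.smul_mem hx c.2
  isClosed' := hK.closed

theorem dualCone_dualCone [CompleteSpace F] {K : Set F} (hK : IsClosedConvexCone K) :
    dualCone (dualCone K) = K :=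
  congrArg SetLike.coe (ProperCone.innerDual_innerDual hK.toProperCone)

theorem exists_apply_eq_mul_sub_inner [CompleteSpace F] (f : StrongDual ℝ (F × ℝ))
    (hs : 0 < f (0, 1)) :
    ∃ x : F, ∀ e t, f (e, t) = f (0, 1) * (t - ⟪x, e⟫) := by
  refine ⟨-(f (0, 1))⁻¹ • (InnerProductSpace.toDual ℝ F).symm (f ∘L .inl ℝ F ℝ), fun e t => ?_⟩
  have hsplit : f (e, t) = f (e, 0) + t * f (0, 1) := by
    rw [← smul_eq_mul, ← map_smul, ← map_add, Prod.smul_mk, Prod.mk_add_mk, smul_zero,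
      smul_eq_mul, mul_one, add_zero, zero_add]
  rw [real_inner_smul_left, InnerProductSpace.toDual_symm_apply, hsplit]
  simp only [ContinuousLinearMap.coe_comp, Function.comp_apply, ContinuousLinearMap.inl_apply]
  field_simp
  ring

theorem image_inner_neg_left (v : F) (s : Set F) :
    (fun y => ⟪-v, y⟫) '' s = -((fun y => ⟪v, y⟫) '' s) := by
  simp only [inner_neg_left, ← Set.image_neg_eq_neg, Set.image_image]

end Cones

section ConicDuality

variable {A : E →ₗ[ℝ] E'} {K : Set E'} {C : Set E} {b : E'} {c : E}

theorem inner_le_inner_of_mem_Xfeas_of_mem_Yfeas {x : E} {y : E'} (hx : x ∈ Xfeas A K C b)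
    (hy : y ∈ Yfeas A K C c) : ⟪c, x⟫ ≤ ⟪b, y⟫ := by
  have hK : 0 ≤ ⟪b - A x, y⟫ := hy.1 _ hx.2
  have hC : 0 ≤ ⟪x, LinearMap.adjoint A y - c⟫ := hy.2 x hx.1
  rw [inner_sub_left] at hK
  rw [inner_sub_right, LinearMap.adjoint_inner_right, real_inner_comm c x] at hC
  linarith

theorem bddAbove_primal_values {y : E'} (hy : y ∈ Yfeas A K C c) :
    BddAbove ((fun x => ⟪c, x⟫) '' Xfeas A K C b) :=
  ⟨⟪b, y⟫, by rintro _ ⟨x, hx, rfl⟩; exact inner_le_inner_of_mem_Xfeas_of_mem_Yfeas hx hy⟩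

theorem bddBelow_dual_values {x : E} (hx : x ∈ Xfeas A K C b) :
    BddBelow ((fun y => ⟪b, y⟫) '' Yfeas A K C c) :=
  ⟨⟪c, x⟫, by rintro _ ⟨y, hy, rfl⟩; exact inner_le_inner_of_mem_Xfeas_of_mem_Yfeas hx hy⟩

theorem Pval_le_Dval (hX : (Xfeas A K C b).Nonempty) (hY : (Yfeas A K C c).Nonempty) :
    Pval A K C b c ≤ Dval A K C b c :=
  csSup_le (hX.image _) fun _ ⟨_, hx, hxv⟩ => hxv ▸ le_csInf (hY.image _)
    fun _ ⟨_, hy, hyv⟩ => hyv ▸ inner_le_inner_of_mem_Xfeas_of_mem_Yfeas hx hy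

theorem mem_Xfeas_of_forall_inner_le (hK : IsClosedConvexCone K) (hC : IsClosedConvexCone C)
    {x : E} (h : ∀ y ∈ dualCone K, ∀ w ∈ dualCone C, ⟪x, LinearMap.adjoint A y - w⟫ ≤ ⟪b, y⟫) :
    x ∈ Xfeas A K C b := by
  refine ⟨?_, ?_⟩
  · rw [← dualCone_dualCone hC]
    intro w hw
    have := h 0 (isClosedConvexCone_dualCone K).zero_mem w hw
    simp only [map_zero, zero_sub, inner_neg_right, inner_zero_right] at this
    rw [real_inner_comm]
    linarith
  · rw [← dualCone_dualCone hK]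
    intro y hy
    have := h y hy 0 (isClosedConvexCone_dualCone C).zero_mem
    rw [sub_zero, LinearMap.adjoint_inner_right] at this
    rw [real_inner_comm, inner_sub_left]
    linarith

variable (A K C b) in
/-- The cone `L*_p(K* × C*)`. -/
def dualLiftCone : PointedCone ℝ (E × ℝ) where
  carrier := {p | ∃ y ∈ dualCone K, ∃ w ∈ dualCone C, p = (LinearMap.adjoint A y - w, ⟪b, y⟫)}
  add_mem' := by
    rintro _ _ ⟨y₁, hy₁, w₁, hw₁, rfl⟩ ⟨y₂, hy₂, w₂, hw₂, rfl⟩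
    refine ⟨y₁ + y₂, (isClosedConvexCone_dualCone K).add_mem hy₁ hy₂,
      w₁ + w₂, (isClosedConvexCone_dualCone C).add_mem hw₁ hw₂, ?_⟩
    simp only [map_add, inner_add_right, Prod.mk_add_mk]
    abel_nf
  zero_mem' := ⟨0, (isClosedConvexCone_dualCone K).zero_mem, 0,
    (isClosedConvexCone_dualCone C).zero_mem, by rw [map_zero, sub_zero, inner_zero_right]; rfl⟩
  smul_mem' := by
    rintro t _ ⟨y, hy, w, hw, rfl⟩
    refine ⟨(t : ℝ) • y, (isClosedConvexCone_dualCone K).smul_mem hy t.2,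
      (t : ℝ) • w, (isClosedConvexCone_dualCone C).smul_mem hw t.2, ?_⟩
    rw [Nonneg.mk_smul, Prod.smul_mk, map_smul, smul_sub, real_inner_smul_right, smul_eq_mul]

theorem mk_mem_dualLiftCone_iff {t : ℝ} :
    (c, t) ∈ dualLiftCone A K C b ↔ t ∈ (fun y => ⟪b, y⟫) '' Yfeas A K C c := by
  constructor
  · rintro ⟨y, hy, w, hw, hp⟩
    obtain ⟨hc, rfl⟩ := Prod.mk.inj hp
    exact ⟨y, ⟨hy, by rwa [hc, sub_sub_cancel]⟩, rfl⟩
  · rintro ⟨y, ⟨hy, hyc⟩, rfl⟩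
    exact ⟨y, hy, _, hyc, by rw [sub_sub_cancel]⟩

theorem lt_Pval_of_lt_Dval (hK : IsClosedConvexCone K) (hC : IsClosedConvexCone C)
    (hcl : IsClosed (dualLiftCone A K C b : Set (E × ℝ)))
    (hX : (Xfeas A K C b).Nonempty) (hY : (Yfeas A K C c).Nonempty) {γ : ℝ}
    (hγ : γ < Dval A K C b c) : γ < Pval A K C b c := by
  obtain ⟨x₀, hx₀⟩ := hX
  obtain ⟨y₀, hy₀⟩ := hY
  have hγ₀ : γ < ⟪b, y₀⟫ := hγ.trans_le (csInf_le (bddBelow_dual_values hx₀) ⟨y₀, hy₀, rfl⟩)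
  have hγM : (c, γ) ∉ dualLiftCone A K C b := fun h =>
    hγ.not_ge (csInf_le (bddBelow_dual_values hx₀) (mk_mem_dualLiftCone_iff.1 h))
  obtain ⟨f, hfM, hfγ⟩ := ProperCone.hyperplane_separation_point ⟨_, hcl⟩ hγM
  have hs : 0 < f (0, 1) := by
    have hy₀M := hfM _ (mk_mem_dualLiftCone_iff.2 ⟨y₀, hy₀, rfl⟩)
    have hlin : f (c, ⟪b, y₀⟫) = f (c, γ) + (⟪b, y₀⟫ - γ) * f (0, 1) := by
      rw [← smul_eq_mul, ← map_smul, ← map_add, Prod.smul_mk, Prod.mk_add_mk, smul_zero,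
        smul_eq_mul, mul_one, add_zero, add_sub_cancel]
    exact pos_of_mul_pos_right (by linarith) (sub_pos.2 hγ₀).le
  obtain ⟨x, hfx⟩ := exists_apply_eq_mul_sub_inner f hs
  have hxX : x ∈ Xfeas A K C b := mem_Xfeas_of_forall_inner_le hK hC fun y hy w hw => by
    have := hfM _ ⟨y, hy, w, hw, rfl⟩
    rw [hfx] at this
    exact sub_nonneg.1 (nonneg_of_mul_nonneg_right this hs)
  calc γ < ⟪c, x⟫ := by
        rw [hfx] at hfγ
        rw [real_inner_comm]
        exact sub_neg.1 (neg_of_mul_neg_right hfγ hs.le)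
    _ ≤ Pval A K C b c := le_csSup (bddAbove_primal_values hy₀) ⟨x, hxX, rfl⟩

theorem exists_dual_optimal_and_Pval_eq_Dval (hK : IsClosedConvexCone K)
    (hC : IsClosedConvexCone C) (hcl : IsClosed (dualLiftCone A K C b : Set (E × ℝ)))
    (hX : (Xfeas A K C b).Nonempty) (hY : (Yfeas A K C c).Nonempty) :
    (∃ y ∈ Yfeas A K C c, ⟪b, y⟫ = Dval A K C b c) ∧ Pval A K C b c = Dval A K C b c := by
  have hvalues : (fun y => ⟪b, y⟫) '' Yfeas A K C c = (c, ·) ⁻¹' dualLiftCone A K C b :=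
    Set.ext fun _ => mk_mem_dualLiftCone_iff.symm
  obtain ⟨x₀, hx₀⟩ := hX
  refine ⟨?_, le_antisymm (Pval_le_Dval ⟨x₀, hx₀⟩ hY)
    (le_of_forall_lt fun γ hγ => lt_Pval_of_lt_Dval hK hC hcl ⟨x₀, hx₀⟩ hY hγ)⟩
  have hclosed : IsClosed ((fun y => ⟪b, y⟫) '' Yfeas A K C c) :=
    hvalues ▸ hcl.preimage (Continuous.prodMk_right c)
  exact hclosed.csInf_mem (hY.image _) (bddBelow_dual_values hx₀)

theorem Xfeas_neg_adjoint :
    Xfeas (-LinearMap.adjoint A) (dualCone C) (dualCone K) (-c) = Yfeas A K C c := by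
  ext y
  rw [Xfeas, Yfeas, Set.mem_ofPred_eq, Set.mem_ofPred_eq, LinearMap.neg_apply, sub_neg_eq_add,
    neg_add_eq_sub]

theorem Yfeas_neg_adjoint (hK : IsClosedConvexCone K) (hC : IsClosedConvexCone C) :
    Yfeas (-LinearMap.adjoint A) (dualCone C) (dualCone K) (-b) = Xfeas A K C b := by
  ext x
  rw [Xfeas, Yfeas, Set.mem_ofPred_eq, Set.mem_ofPred_eq, dualCone_dualCone hK,
    dualCone_dualCone hC, map_neg, LinearMap.adjoint_adjoint, LinearMap.neg_apply,
    sub_neg_eq_add, neg_add_eq_sub]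

theorem Pval_neg_adjoint :
    Pval (-LinearMap.adjoint A) (dualCone C) (dualCone K) (-c) (-b) = -Dval A K C b c := by
  rw [Pval, Xfeas_neg_adjoint, image_inner_neg_left, Real.sSup_neg, Dval]

theorem Dval_neg_adjoint (hK : IsClosedConvexCone K) (hC : IsClosedConvexCone C) :
    Dval (-LinearMap.adjoint A) (dualCone C) (dualCone K) (-c) (-b) = -Pval A K C b c := by
  rw [Dval, Yfeas_neg_adjoint hK hC, image_inner_neg_left, Real.sInf_neg, Pval]

theorem dualLiftCone_neg_adjoint (hK : IsClosedConvexCone K) (hC : IsClosedConvexCone C) :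
    (dualLiftCone (-LinearMap.adjoint A) (dualCone C) (dualCone K) (-c) : Set (E' × ℝ)) =
      -{p | ∃ x ∈ C, ∃ s ∈ K, p = (A x + s, ⟪c, x⟫)} := by
  ext p
  simp only [dualLiftCone, dualCone_dualCone hK, dualCone_dualCone hC, map_neg,
    LinearMap.adjoint_adjoint, LinearMap.neg_apply, inner_neg_left, Set.mem_neg]
  change (∃ x ∈ C, ∃ s ∈ K, p = (-A x - s, -⟪c, x⟫)) ↔
    ∃ x ∈ C, ∃ s ∈ K, -p = (A x + s, ⟪c, x⟫)
  refine exists_congr fun x => and_congr_right fun _ => exists_congr fun s =>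
    and_congr_right fun _ => ?_
  rw [neg_eq_iff_eq_neg, Prod.neg_mk, neg_add']

theorem exists_primal_optimal_and_Pval_eq_Dval (hK : IsClosedConvexCone K)
    (hC : IsClosedConvexCone C)
    (hcl : IsClosed {p : E' × ℝ | ∃ x ∈ C, ∃ s ∈ K, p = (A x + s, ⟪c, x⟫)})
    (hX : (Xfeas A K C b).Nonempty) (hY : (Yfeas A K C c).Nonempty) :
    (∃ x ∈ Xfeas A K C b, ⟪c, x⟫ = Pval A K C b c) ∧ Pval A K C b c = Dval A K C b c := by
  obtain ⟨⟨x, hx, hxv⟩, hPD⟩ := exists_dual_optimal_and_Pval_eq_Dval (A := -LinearMap.adjoint A)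
    (isClosedConvexCone_dualCone C) (isClosedConvexCone_dualCone K)
    (by rw [dualLiftCone_neg_adjoint hK hC]; exact hcl.neg) (by rwa [Xfeas_neg_adjoint])
    (by rwa [Yfeas_neg_adjoint hK hC])
  rw [Yfeas_neg_adjoint hK hC] at hx
  rw [Dval_neg_adjoint hK hC, inner_neg_left, neg_inj] at hxv
  rw [Pval_neg_adjoint, Dval_neg_adjoint hK hC, neg_inj] at hPD
  exact ⟨⟨x, hx, hxv⟩, hPD.symm⟩

end ConicDuality

theorem stmt0 (A : E →ₗ[ℝ] E') (K : Set E') (C : Set E)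
    (hK : IsClosedConvexCone K) (hC : IsClosedConvexCone C) (b : E') (c : E)
    (hXne : (Xfeas A K C b).Nonempty) (hYne : (Yfeas A K C c).Nonempty) :
    (IsClosed {p : E × ℝ | ∃ y ∈ dualCone K, ∃ w ∈ dualCone C,
        p = (LinearMap.adjoint A y - w, ⟪b, y⟫)} →
      (∃ y ∈ Yfeas A K C c, ⟪b, y⟫ = Dval A K C b c) ∧
        Pval A K C b c = Dval A K C b c) ∧
    (IsClosed {p : E' × ℝ | ∃ x ∈ C, ∃ s ∈ K, p = (A x + s, ⟪c, x⟫)} →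
      (∃ x ∈ Xfeas A K C b, ⟪c, x⟫ = Pval A K C b c) ∧
        Pval A K C b c = Dval A K C b c) :=
  ⟨fun hcl => exists_dual_optimal_and_Pval_eq_Dval hK hC hcl hXne hYne,
    fun hcl => exists_primal_optimal_and_Pval_eq_Dval hK hC hcl hXne hYne⟩
end

section
/- If the primal feasible set X(b) is nonempty and c = A* y for some y in the orthogonal complement of the linear span of K, then the dual is feasible with y ∈ Y(c), the objective ⟨c, x⟩ equals ⟨b, y⟩ for every x ∈ X(b), and strong duality holds: P* = D* with the dual solvable. Symmetrically, if the dual feasible set Y(c) is nonempty and b = A x for some x in the lineality space C ∩ (−C) of C, then strong duality holds with the primal solvable. -/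
open RealInnerProductSpace Set Pointwise

variable {E E' : Type*}
  [NormedAddCommGroup E] [InnerProductSpace ℝ E] [FiniteDimensional ℝ E]
  [NormedAddCommGroup E'] [InnerProductSpace ℝ E'] [FiniteDimensional ℝ E']

lemma weakDual {A : E →ₗ[ℝ] E'} {K : Set E'} {C : Set E} {b : E'} {c : E}
    {x : E} (hx : x ∈ Xfeas A K C b) {y : E'} (hy : y ∈ Yfeas A K C c) :
    ⟪c, x⟫ ≤ ⟪b, y⟫ := by
  have h1 : (0:ℝ) ≤ ⟪b - A x, y⟫ := hy.1 _ hx.2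
  have h2 : (0:ℝ) ≤ ⟪x, LinearMap.adjoint A y - c⟫ := hy.2 _ hx.1
  have hadj : ⟪LinearMap.adjoint A y, x⟫ = ⟪y, A x⟫ := LinearMap.adjoint_inner_left A x y
  rw [inner_sub_left] at h1
  rw [inner_sub_right] at h2
  have e1 := real_inner_comm (A x) y
  have e2 := real_inner_comm x (LinearMap.adjoint A y)
  have e3 := real_inner_comm x c
  linarith

theorem stmt3 (A : E →ₗ[ℝ] E') (K : Set E') (C : Set E)
    (hK : IsClosedConvexCone K) (hC : IsClosedConvexCone C) (b : E') (c : E) :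
    ((Xfeas A K C b).Nonempty →
      ∀ y : E', y ∈ (Submodule.span ℝ K)ᗮ → c = LinearMap.adjoint A y →
        y ∈ Yfeas A K C c ∧
        (∀ x ∈ Xfeas A K C b, ⟪c, x⟫ = ⟪b, y⟫) ∧
        Pval A K C b c = Dval A K C b c ∧
        ∃ y' ∈ Yfeas A K C c, ⟪b, y'⟫ = Dval A K C b c) ∧
    ((Yfeas A K C c).Nonempty →
      ∀ x : E, x ∈ C ∩ -C → b = A x →
        Pval A K C b c = Dval A K C b c ∧
        ∃ x' ∈ Xfeas A K C b, ⟪c, x'⟫ = Pval A K C b c) := by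
  constructor
  · rintro ⟨x₀, hx₀⟩ y hy hc
    have hyK : ∀ k ∈ K, ⟪k, y⟫ = 0 := fun k hk =>
      (Submodule.mem_orthogonal _ _).mp hy _ (Submodule.subset_span hk)
    have hyY : y ∈ Yfeas A K C c := by
      refine ⟨fun k hk => le_of_eq (hyK k hk).symm, ?_⟩
      rw [hc, sub_self]
      intro x _
      simp
    have hval : ∀ x ∈ Xfeas A K C b, ⟪c, x⟫ = ⟪b, y⟫ := by
      intro x hx
      have h0 : ⟪b - A x, y⟫ = 0 := hyK _ hx.2
      rw [inner_sub_left] at h0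
      have hadj : ⟪LinearMap.adjoint A y, x⟫ = ⟪y, A x⟫ := LinearMap.adjoint_inner_left A x y
      rw [hc, hadj, real_inner_comm]
      linarith
    refine ⟨hyY, hval, ?_⟩
    have hPmem : ⟪b, y⟫ ∈ (fun x => ⟪c, x⟫) '' Xfeas A K C b :=
      ⟨x₀, hx₀, hval _ hx₀⟩
    have hDmem : ⟪b, y⟫ ∈ (fun y => ⟪b, y⟫) '' Yfeas A K C c := ⟨y, hyY, rfl⟩
    have hP : Pval A K C b c = ⟪b, y⟫ := by
      apply le_antisymm
      · apply csSup_le ⟨_, hPmem⟩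
        rintro r ⟨x, hx, rfl⟩
        exact le_of_eq (hval _ hx)
      · apply le_csSup ⟨⟪b, y⟫, ?_⟩ hPmem
        rintro r ⟨x, hx, rfl⟩
        exact le_of_eq (hval _ hx)
    have hD : Dval A K C b c = ⟪b, y⟫ := by
      apply le_antisymm
      · refine csInf_le ⟨⟪b, y⟫, ?_⟩ hDmem
        rintro r ⟨y', hy', rfl⟩
        calc ⟪b, y⟫ = ⟪c, x₀⟫ := (hval _ hx₀).symm
        _ ≤ ⟪b, y'⟫ := weakDual hx₀ hy'
      · apply le_csInf ⟨_, hDmem⟩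
        rintro r ⟨y', hy', rfl⟩
        calc ⟪b, y⟫ = ⟪c, x₀⟫ := (hval _ hx₀).symm
        _ ≤ ⟪b, y'⟫ := weakDual hx₀ hy'
    exact ⟨hP.trans hD.symm, y, hyY, hD.symm⟩
  · rintro ⟨y₀, hy₀⟩ x hx hb
    have hxX : x ∈ Xfeas A K C b := ⟨hx.1, by rw [hb, sub_self]; exact hK.zero_mem⟩
    have hval : ∀ y ∈ Yfeas A K C c, ⟪b, y⟫ = ⟪c, x⟫ := by
      intro y hy
      have h1 : (0:ℝ) ≤ ⟪x, LinearMap.adjoint A y - c⟫ := hy.2 _ hx.1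
      have h2 : (0:ℝ) ≤ ⟪-x, LinearMap.adjoint A y - c⟫ := hy.2 _ (Set.mem_neg.mp hx.2)
      rw [inner_neg_left] at h2
      have h0 : ⟪x, LinearMap.adjoint A y - c⟫ = 0 := le_antisymm (by linarith) h1
      rw [inner_sub_right] at h0
      have hadj : ⟪LinearMap.adjoint A y, x⟫ = ⟪y, A x⟫ := LinearMap.adjoint_inner_left A x y
      have e2 := real_inner_comm x (LinearMap.adjoint A y)
      have e3 := real_inner_comm x c
      have e4 := real_inner_comm (A x) y
      rw [hb]
      linarith
    have hPmem : ⟪c, x⟫ ∈ (fun x => ⟪c, x⟫) '' Xfeas A K C b := ⟨x, hxX, rfl⟩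
    have hDmem : ⟪c, x⟫ ∈ (fun y => ⟪b, y⟫) '' Yfeas A K C c := ⟨y₀, hy₀, hval _ hy₀⟩
    have hP : Pval A K C b c = ⟪c, x⟫ := by
      apply le_antisymm
      · apply csSup_le ⟨_, hPmem⟩
        rintro r ⟨x', hx', rfl⟩
        calc ⟪c, x'⟫ ≤ ⟪b, y₀⟫ := weakDual hx' hy₀
        _ = ⟪c, x⟫ := hval _ hy₀
      · apply le_csSup ⟨⟪c, x⟫, ?_⟩ hPmem
        rintro r ⟨x', hx', rfl⟩
        calc ⟪c, x'⟫ ≤ ⟪b, y₀⟫ := weakDual hx' hy₀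
        _ = ⟪c, x⟫ := hval _ hy₀
    have hD : Dval A K C b c = ⟪c, x⟫ := by
      apply le_antisymm
      · apply csInf_le ⟨⟪c, x⟫, ?_⟩ hDmem
        rintro r ⟨y', hy', rfl⟩
        exact le_of_eq (hval _ hy').symm
      · apply le_csInf ⟨_, hDmem⟩
        rintro r ⟨y', hy', rfl⟩
        exact le_of_eq (hval _ hy').symm
    exact ⟨hP.trans hD.symm, x, hxX, hP.symm⟩
end

section
/- If the dual feasible set Y(c) is nonempty and the dual value D* = inf{⟨b,y⟩ : y ∈ Y(c)} is finite (i.e., {⟨b,y⟩ : y ∈ Y(c)} is bounded below), then the point (c, D*) belongs to the closure of L*_p(K* × C*) = {(A* y − w, ⟨b,y⟩) : y ∈ K*, w ∈ C*}. Symmetrically, if X(b) is nonempty and P* = sup{⟨c,x⟩ : x ∈ X(b)} is finite, then (b, P*) belongs to the closure of L*_d(C × K) = {(A x + s, ⟨c,x⟩) : x ∈ C, s ∈ K}. -/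
open RealInnerProductSpace Set Pointwise

variable {E E' : Type*}
  [NormedAddCommGroup E] [InnerProductSpace ℝ E] [FiniteDimensional ℝ E]
  [NormedAddCommGroup E'] [InnerProductSpace ℝ E'] [FiniteDimensional ℝ E']

theorem stmt7 (A : E →ₗ[ℝ] E') (K : Set E') (C : Set E)
    (hK : IsClosedConvexCone K) (hC : IsClosedConvexCone C) (b : E') (c : E) :
    ((Yfeas A K C c).Nonempty →
      BddBelow ((fun y => ⟪b, y⟫) '' Yfeas A K C c) →
      (c, Dval A K C b c) ∈
        closure {p : E × ℝ | ∃ y ∈ dualCone K, ∃ w ∈ dualCone C,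
          p = (LinearMap.adjoint A y - w, ⟪b, y⟫)}) ∧
    ((Xfeas A K C b).Nonempty →
      BddAbove ((fun x => ⟪c, x⟫) '' Xfeas A K C b) →
      (b, Pval A K C b c) ∈
        closure {p : E' × ℝ | ∃ x ∈ C, ∃ s ∈ K, p = (A x + s, ⟪c, x⟫)}) := by
  constructor
  · intro hne hbdd
    have hS : Dval A K C b c ∈ closure ((fun y => ⟪b, y⟫) '' Yfeas A K C c) :=
      csInf_mem_closure (hne.image _) hbdd
    have hcont : Continuous (fun r : ℝ => ((c, r) : E × ℝ)) := by continuity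
    have hmem := image_closure_subset_closure_image (s := (fun y => ⟪b, y⟫) '' Yfeas A K C c)
      hcont ⟨_, hS, rfl⟩
    refine closure_mono ?_ hmem
    rintro p ⟨r, ⟨y, hy, rfl⟩, rfl⟩
    exact ⟨y, hy.1, LinearMap.adjoint A y - c, hy.2, by
      simp [Prod.ext_iff, sub_sub_cancel]⟩
  · intro hne hbdd
    have hS : Pval A K C b c ∈ closure ((fun x => ⟪c, x⟫) '' Xfeas A K C b) :=
      csSup_mem_closure (hne.image _) hbdd
    have hcont : Continuous (fun r : ℝ => ((b, r) : E' × ℝ)) := by continuity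
    have hmem := image_closure_subset_closure_image (s := (fun x => ⟪c, x⟫) '' Xfeas A K C b)
      hcont ⟨_, hS, rfl⟩
    refine closure_mono ?_ hmem
    rintro p ⟨r, ⟨x, hx, rfl⟩, rfl⟩
    exact ⟨x, hx.1, b - A x, hx.2, by
      simp [Prod.ext_iff]⟩
end
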